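/- Let M₁ and M₂ be complete deterministic automata over the same finite alphabet Σ with finite state sets Q₁ and Q₂, and let S₁ ⊆ Q₁ and S₂ ⊆ Q₂. Then there exists an ω-word w with inf_{M₁}(w) = S₁ and inf_{M₂}(w) = S₂ if and only if there exists a reachable SCC C of the product automaton M₁ × M₂ with π₁(C) = S₁ and π₂(C) = S₂. -/

import Mathlib

open Filter

/-- Extended transition function: `dstar δ q x` is the state reached from `q` reading `x`. -/
def dstar {Q A : Type*} (δ : Q → A → Q) (q : Q) (x : List A) : Q := x.foldl δ q

/-- The run of a deterministic automaton on an ω-word from state `q`. -/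
def run {Q A : Type*} (δ : Q → A → Q) (q : Q) (w : ℕ → A) : ℕ → Q
  | 0 => q
  | n + 1 => δ (run δ q w n) (w n)

/-- The set of states visited infinitely often by the run on `w` from `q`. -/
def infOcc {Q A : Type*} (δ : Q → A → Q) (q : Q) (w : ℕ → A) : Set Q :=
  {p | ∃ᶠ n in atTop, run δ q w n = p}

/-- `C` is a strongly connected component of the automaton with transitions `δ`. -/
def IsSCC {Q A : Type*} (δ : Q → A → Q) (C : Set Q) : Prop :=
  C.Nonempty ∧ ∀ q₁ ∈ C, ∀ q₂ ∈ C, ∃ x : List A, x ≠ [] ∧ dstar δ q₁ x = q₂ ∧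
    ∀ x', x' <+: x → dstar δ q₁ x' ∈ C

/-- `q` is reachable from the initial state `qι`. -/
def Reachable {Q A : Type*} (δ : Q → A → Q) (qι q : Q) : Prop :=
  ∃ x : List A, dstar δ qι x = q

/-- The ultimately periodic ω-word `u(v)^ω`. -/
def upWord {A : Type*} (u v : List A) (hv : v ≠ []) : ℕ → A := fun n =>
  if h : n < u.length then u[n]
  else v[(n - u.length) % v.length]'(Nat.mod_lt _ (List.length_pos_iff.mpr hv))

/-- The transition function of the product automaton. -/
def prodStep {Q₁ Q₂ A : Type*} (δ₁ : Q₁ → A → Q₁) (δ₂ : Q₂ → A → Q₂) :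
    Q₁ × Q₂ → A → Q₁ × Q₂ := fun p a => (δ₁ p.1 a, δ₂ p.2 a)

/-- The ω-word `x·z` obtained by prepending the finite word `x` to `z`. -/
def prepend {A : Type*} (x : List A) (z : ℕ → A) : ℕ → A := fun n =>
  if h : n < x.length then x[n] else z (n - x.length)

/-!
The product run on `w` is the pair of the two component runs, so the infinity sets of `w` in
`M₁` and `M₂` are, by pigeonhole, the projections of its infinity set in `M₁ × M₂`. It
therefore suffices to show that the infinity sets of words in a finite automaton are exactly
its reachable SCCs.
A tail of the run that stays in the infinity set links any two of its states, so the infinity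
set is a reachable SCC. Conversely, a reachable SCC `C` carries a cycle through all of its
states that never leaves `C`; the word reaching `C` and then repeating this cycle forever has
infinity set `C`.
-/

open Filter

lemma Filter.Frequently.exists_frequently_eq {α β : Type*} [Finite β] {l : Filter α}
    {f : α → β} {S : Set β} (h : ∃ᶠ n in l, f n ∈ S) : ∃ b ∈ S, ∃ᶠ n in l, f n = b := by
  have : ∃ᶠ n in l, ∃ b : S, f n = b := h.mono fun n hn => ⟨⟨f n, hn⟩, rfl⟩
  obtain ⟨b, hb⟩ := frequently_exists.1 this
  exact ⟨b, b.2, hb⟩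

lemma image_setOf_frequently_eq {α β γ : Type*} [Finite β] {l : Filter α} (g : α → β)
    (f : β → γ) : f '' {b | ∃ᶠ n in l, g n = b} = {c | ∃ᶠ n in l, f (g n) = c} := by
  ext c
  constructor
  · rintro ⟨b, hb, rfl⟩
    exact hb.mono fun n hn => by rw [hn]
  · intro hc
    have : ∃ᶠ n in l, g n ∈ f ⁻¹' {c} := hc
    obtain ⟨b, rfl, hb⟩ := this.exists_frequently_eq
    exact ⟨b, hb, rfl⟩

section Automaton

variable {Q A : Type*} {δ : Q → A → Q}

lemma dstar_append (q : Q) (x y : List A) :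
    dstar δ q (x ++ y) = dstar δ (dstar δ q x) y :=
  List.foldl_append

def visited (δ : Q → A → Q) (q : Q) (x : List A) : Set Q :=
  {p | ∃ x', x' <+: x ∧ dstar δ q x' = p}

lemma mem_visited_self (q : Q) (x : List A) : q ∈ visited δ q x :=
  ⟨[], List.nil_prefix, rfl⟩

lemma visited_nil (q : Q) : visited δ q ([] : List A) = {q} := by
  ext p
  simp [visited, eq_comm, dstar]

lemma visited_cons (q : Q) (a : A) (x : List A) :
    visited δ q (a :: x) = insert q (visited δ (δ q a) x) := by
  ext p
  simp only [visited, List.prefix_cons_iff, Set.mem_insert_iff, Set.mem_ofPred_eq]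
  constructor
  · rintro ⟨x', rfl | ⟨t, rfl, ht⟩, rfl⟩
    · exact .inl rfl
    · exact .inr ⟨t, ht, rfl⟩
  · rintro (rfl | ⟨t, ht, rfl⟩)
    · exact ⟨[], .inl rfl, rfl⟩
    · exact ⟨a :: t, .inr ⟨t, rfl, ht⟩, rfl⟩

lemma visited_append (q : Q) (x y : List A) :
    visited δ q (x ++ y) = visited δ q x ∪ visited δ (dstar δ q x) y := by
  induction x generalizing q with
  | nil => simp [visited_nil, dstar, mem_visited_self]
  | cons a x ih => simp only [List.cons_append, visited_cons, ih, Set.insert_union]; rfl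

lemma IsSCC.exists_path {C : Set Q} (hC : IsSCC δ C) {p₁ p₂ : Q} (h₁ : p₁ ∈ C) (h₂ : p₂ ∈ C) :
    ∃ x : List A, x ≠ [] ∧ dstar δ p₁ x = p₂ ∧ visited δ p₁ x ⊆ C := by
  obtain ⟨x, hx, rfl, hxC⟩ := hC.2 p₁ h₁ p₂ h₂
  exact ⟨x, hx, rfl, by rintro _ ⟨x', hx', rfl⟩; exact hxC x' hx'⟩

lemma IsSCC.exists_cycle_visiting {C : Set Q} (hC : IsSCC δ C) {c : Q} (hc : c ∈ C)
    {T : Set Q} (hT : T.Finite) (hTC : T ⊆ C) :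
    ∃ v : List A, v ≠ [] ∧ dstar δ c v = c ∧ T ⊆ visited δ c v ∧ visited δ c v ⊆ C := by
  induction T, hT using Set.Finite.induction_on with
  | empty =>
    obtain ⟨v, hv, hvc, hvC⟩ := hC.exists_path hc hc
    exact ⟨v, hv, hvc, Set.empty_subset _, hvC⟩
  | @insert e T _ _ ih =>
    obtain ⟨v, hv, hvc, hTv, hvC⟩ := ih ((Set.subset_insert e T).trans hTC)
    have he : e ∈ C := hTC (Set.mem_insert e T)
    obtain ⟨x, -, hxe, hxC⟩ := hC.exists_path hc he
    obtain ⟨y, -, hyc, hyC⟩ := hC.exists_path he hc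
    refine ⟨v ++ (x ++ y), by simp [hv], ?_, ?_, ?_⟩
    · rw [dstar_append, dstar_append, hvc, hxe, hyc]
    · rw [visited_append, visited_append, hvc, hxe, Set.insert_subset_iff]
      exact ⟨.inr (.inr (mem_visited_self e y)), hTv.trans Set.subset_union_left⟩
    · rw [visited_append, visited_append, hvc, hxe]
      exact Set.union_subset hvC (Set.union_subset hxC hyC)

@[simp] lemma run_zero (q : Q) (w : ℕ → A) : run δ q w 0 = q := rfl

lemma run_add_length {w : ℕ → A} {m : ℕ} {x : List A}
    (hx : ∀ i (hi : i < x.length), w (m + i) = x[i]) (q : Q) :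
    run δ q w (m + x.length) = dstar δ (run δ q w m) x := by
  induction x generalizing m with
  | nil => rfl
  | cons a x ih =>
    have hm : w m = a := hx 0 (Nat.succ_pos _)
    have hx' : ∀ i (hi : i < x.length), w (m + 1 + i) = x[i] := fun i hi => by
      rw [Nat.add_right_comm, Nat.add_assoc]; exact hx (i + 1) (Nat.succ_lt_succ hi)
    rw [List.length_cons, show m + (x.length + 1) = m + 1 + x.length by omega, ih hx']
    simp only [run, hm]
    rfl

lemma run_prodStep {Q₁ Q₂ : Type*} (δ₁ : Q₁ → A → Q₁) (δ₂ : Q₂ → A → Q₂) (q₁ : Q₁) (q₂ : Q₂)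
    (w : ℕ → A) (n : ℕ) :
    run (prodStep δ₁ δ₂) (q₁, q₂) w n = (run δ₁ q₁ w n, run δ₂ q₂ w n) := by
  induction n with
  | zero => rfl
  | succ n ih => simp only [run, ih, prodStep]

lemma upWord_of_lt (u v : List A) (hv : v ≠ []) {i : ℕ} (hi : i < u.length) :
    upWord u v hv i = u[i] :=
  dif_pos hi

lemma upWord_add_mul_add (u v : List A) (hv : v ≠ []) (k : ℕ) {i : ℕ} (hi : i < v.length) :
    upWord u v hv (u.length + k * v.length + i) = v[i] := by
  have hk : u.length + k * v.length + i - u.length = i + k * v.length := by omega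
  simp only [upWord, dif_neg (by omega : ¬u.length + k * v.length + i < u.length), hk,
    Nat.add_mul_mod_self_right, Nat.mod_eq_of_lt hi]

lemma run_upWord {q c : Q} {u v : List A} (hv : v ≠ []) (hu : dstar δ q u = c)
    (hvc : dstar δ c v = c) (k : ℕ) {j : ℕ} (hj : j ≤ v.length) :
    run δ q (upWord u v hv) (u.length + k * v.length + j) = dstar δ c (v.take j) := by
  have hperiod : ∀ k, run δ q (upWord u v hv) (u.length + k * v.length) = c := by
    intro k
    induction k with
    | zero =>
      rw [Nat.zero_mul, Nat.add_zero, ← hu]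
      simpa using run_add_length (δ := δ) (m := 0) (fun i hi => by
        rw [Nat.zero_add]; exact upWord_of_lt u v hv hi) q
    | succ k ih =>
      rw [Nat.succ_mul, ← Nat.add_assoc,
        run_add_length (fun i hi => upWord_add_mul_add u v hv k hi), ih, hvc]
  have := run_add_length (δ := δ) (x := v.take j) (m := u.length + k * v.length)
    (fun i hi => by rw [List.getElem_take]; exact upWord_add_mul_add u v hv k _) q
  rwa [List.length_take_of_le hj, hperiod] at this

lemma infOcc_upWord {q c : Q} {u v : List A} (hv : v ≠ []) (hu : dstar δ q u = c)
    (hvc : dstar δ c v = c) : infOcc δ q (upWord u v hv) = visited δ c v := by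
  have hL : 0 < v.length := List.length_pos_iff.mpr hv
  ext p
  constructor
  · intro hp
    obtain ⟨n, hn, rfl⟩ := frequently_atTop.1 hp u.length
    have hn : n = u.length + (n - u.length) / v.length * v.length + (n - u.length) % v.length := by
      have := Nat.div_add_mod' (n - u.length) v.length
      omega
    rw [hn, run_upWord hv hu hvc _ (Nat.mod_lt _ hL).le]
    exact ⟨_, List.take_prefix _ _, rfl⟩
  · rintro ⟨x, hx, rfl⟩
    refine frequently_atTop.2 fun N => ⟨u.length + N * v.length + x.length, ?_, ?_⟩
    · have := Nat.le_mul_of_pos_right N hL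
      omega
    · rw [run_upWord hv hu hvc N hx.length_le, ← List.prefix_iff_eq_take.1 hx]

lemma reachable_of_mem_infOcc {q p : Q} {w : ℕ → A} (hp : p ∈ infOcc δ q w) :
    Reachable δ q p := by
  obtain ⟨n, -, rfl⟩ := frequently_atTop.1 hp 0
  refine ⟨List.ofFn fun i : Fin n => w i, ?_⟩
  simpa using (run_add_length (δ := δ) (w := w) (m := 0) (x := List.ofFn fun i : Fin n => w i)
    (fun i hi => by simp) q).symm

variable [Finite Q]

lemma infOcc_nonempty (q : Q) (w : ℕ → A) : (infOcc δ q w).Nonempty := by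
  have : ∃ᶠ n in atTop, run δ q w n ∈ Set.univ := .of_forall fun n => Set.mem_univ _
  obtain ⟨p, -, hp⟩ := this.exists_frequently_eq
  exact ⟨p, hp⟩

lemma eventually_run_mem_infOcc (q : Q) (w : ℕ → A) :
    ∀ᶠ n in atTop, run δ q w n ∈ infOcc δ q w := by
  by_contra h
  obtain ⟨p, hp, hfreq⟩ := (not_eventually.1 h).exists_frequently_eq (S := (infOcc δ q w)ᶜ)
  exact hp hfreq

lemma isSCC_infOcc (q : Q) (w : ℕ → A) : IsSCC δ (infOcc δ q w) := by
  refine ⟨infOcc_nonempty q w, fun p₁ hp₁ p₂ hp₂ => ?_⟩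
  obtain ⟨N, hN⟩ := eventually_atTop.1 (eventually_run_mem_infOcc (δ := δ) q w)
  obtain ⟨n, hNn, rfl⟩ := frequently_atTop.1 hp₁ N
  obtain ⟨m, hnm, rfl⟩ := frequently_atTop.1 hp₂ (n + 1)
  set x := List.ofFn fun i : Fin (m - n) => w (n + i)
  have hrun : ∀ x', x' <+: x → run δ q w (n + x'.length) = dstar δ (run δ q w n) x' :=
    fun x' hx' => run_add_length (fun i hi => by simp [hx'.getElem, x]) q
  refine ⟨x, by simp [x]; omega, ?_, fun x' hx' => ?_⟩
  · rw [← hrun x List.prefix_rfl, List.length_ofFn, Nat.add_sub_cancel' (by omega)]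
  · rw [← hrun x' hx']
    exact hN _ (by omega)

lemma IsSCC.exists_infOcc_eq {C : Set Q} (hC : IsSCC δ C) {q : Q}
    (hreach : ∀ p ∈ C, Reachable δ q p) : ∃ w : ℕ → A, infOcc δ q w = C := by
  obtain ⟨c, hc⟩ := hC.1
  obtain ⟨u, hu⟩ := hreach c hc
  obtain ⟨v, hv, hvc, hCv, hvC⟩ := hC.exists_cycle_visiting hc C.toFinite subset_rfl
  exact ⟨upWord u v hv, (infOcc_upWord hv hu hvc).trans (hvC.antisymm hCv)⟩

end Automaton

section Product

variable {Q₁ Q₂ A : Type*} [Finite Q₁] [Finite Q₂] (δ₁ : Q₁ → A → Q₁) (δ₂ : Q₂ → A → Q₂)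
  (q₁ : Q₁) (q₂ : Q₂) (w : ℕ → A)

lemma image_fst_infOcc_prodStep :
    Prod.fst '' infOcc (prodStep δ₁ δ₂) (q₁, q₂) w = infOcc δ₁ q₁ w := by
  simpa only [infOcc, run_prodStep] using image_setOf_frequently_eq (l := atTop)
    (run (prodStep δ₁ δ₂) (q₁, q₂) w) Prod.fst

lemma image_snd_infOcc_prodStep :
    Prod.snd '' infOcc (prodStep δ₁ δ₂) (q₁, q₂) w = infOcc δ₂ q₂ w := by
  simpa only [infOcc, run_prodStep] using image_setOf_frequently_eq (l := atTop)
    (run (prodStep δ₁ δ₂) (q₁, q₂) w) Prod.snd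

end Product

theorem stmt7_general {A Q₁ Q₂ : Type*} [Fintype Q₁] [Fintype Q₂]
    (δ₁ : Q₁ → A → Q₁) (δ₂ : Q₂ → A → Q₂) (q₁ : Q₁) (q₂ : Q₂)
    (S₁ : Set Q₁) (S₂ : Set Q₂) :
    (∃ w : ℕ → A, infOcc δ₁ q₁ w = S₁ ∧ infOcc δ₂ q₂ w = S₂) ↔
    (∃ C : Set (Q₁ × Q₂), IsSCC (prodStep δ₁ δ₂) C ∧
      (∀ p ∈ C, Reachable (prodStep δ₁ δ₂) (q₁, q₂) p) ∧
      Prod.fst '' C = S₁ ∧ Prod.snd '' C = S₂) := by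
  constructor
  · rintro ⟨w, rfl, rfl⟩
    exact ⟨_, isSCC_infOcc _ w, fun _ => reachable_of_mem_infOcc,
      image_fst_infOcc_prodStep δ₁ δ₂ q₁ q₂ w, image_snd_infOcc_prodStep δ₁ δ₂ q₁ q₂ w⟩
  · rintro ⟨C, hC, hreach, rfl, rfl⟩
    obtain ⟨w, rfl⟩ := hC.exists_infOcc_eq hreach
    exact ⟨w, (image_fst_infOcc_prodStep δ₁ δ₂ q₁ q₂ w).symm,
      (image_snd_infOcc_prodStep δ₁ δ₂ q₁ q₂ w).symm⟩

/-- There is an ω-word whose infinity sets in `M₁` and `M₂` are `S₁` and `S₂` iff there is a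
reachable SCC of the product automaton projecting to `S₁` and `S₂`. -/
theorem stmt7 {A Q₁ Q₂ : Type*} [Fintype A] [Fintype Q₁] [Fintype Q₂]
    (δ₁ : Q₁ → A → Q₁) (δ₂ : Q₂ → A → Q₂) (q₁ : Q₁) (q₂ : Q₂)
    (S₁ : Set Q₁) (S₂ : Set Q₂) :
    (∃ w : ℕ → A, infOcc δ₁ q₁ w = S₁ ∧ infOcc δ₂ q₂ w = S₂) ↔
    (∃ C : Set (Q₁ × Q₂), IsSCC (prodStep δ₁ δ₂) C ∧
      (∀ p ∈ C, Reachable (prodStep δ₁ δ₂) (q₁, q₂) p) ∧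
      Prod.fst '' C = S₁ ∧ Prod.snd '' C = S₂) :=
  stmt7_general δ₁ δ₂ q₁ q₂ S₁ S₂
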